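/- Let A ∈ ℝ^{n×n} with nonzero rows a_i, r ∈ ℝⁿ, and define the random vector r' = r − (⟨a_i, r⟩/‖a_i‖²) a_i where i is chosen with probability ‖a_i‖²/‖A‖_F². Then E‖A r'‖² = ‖A r‖² − (2/‖A‖_F²)‖Aᵀ A r‖² + (1/‖A‖_F²) Σ_{i=1}^n ⟨a_i, r⟩² ‖A a_i‖²/‖a_i‖². -/

import Mathlib

/-!
Expand `‖A r'‖² = ‖y - c_i A a_i‖²` with `y = A r` and `c_i = ⟨a_i, r⟩ / ‖a_i‖²`. Under the weights
`‖a_i‖² / ‖A‖_F²` the `‖y‖²` terms average to `‖y‖²`, the quadratic terms give the last sum, and,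
since `⟨a_i, r⟩ = y_i` and `Σ_i y_i a_i = Aᵀ y`, the cross terms sum to `(2 / ‖A‖_F²) ‖Aᵀ y‖²`.
-/

open RealInnerProductSpace Finset Matrix
noncomputable section

/-- Coercion of a plain vector to Euclidean space (for norms and inner products). -/
def toE {n : ℕ} (v : Fin n → ℝ) : EuclideanSpace ℝ (Fin n) := WithLp.toLp 2 v

theorem inner_toE {n : ℕ} (u v : Fin n → ℝ) : ⟪toE u, toE v⟫ = u ⬝ᵥ v := by
  rw [EuclideanSpace.inner_eq_star_dotProduct, dotProduct_comm]
  rfl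

theorem norm_toE_sq {n : ℕ} (v : Fin n → ℝ) : ‖toE v‖ ^ 2 = v ⬝ᵥ v := by
  rw [← real_inner_self_eq_norm_sq, inner_toE]

section

variable {m n R : Type*} [Fintype m] [Fintype n]

theorem dotProduct_self_sub_smul [CommRing R] (u w : n → R) (c : R) :
    (u - c • w) ⬝ᵥ (u - c • w) = u ⬝ᵥ u - 2 * c * (u ⬝ᵥ w) + c ^ 2 * (w ⬝ᵥ w) := by
  simp only [sub_dotProduct, dotProduct_sub, smul_dotProduct, dotProduct_smul, smul_eq_mul,
    dotProduct_comm w u]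
  ring

theorem sum_mul_dotProduct_mulVec_row [CommRing R] (A : Matrix m n R) (y : m → R) :
    ∑ i, y i * (y ⬝ᵥ A *ᵥ A i) = Aᵀ *ᵥ y ⬝ᵥ Aᵀ *ᵥ y :=
  calc ∑ i, y i * (y ⬝ᵥ A *ᵥ A i)
      = ∑ i, y i * (A i ⬝ᵥ y ᵥ* A) := by simp only [dotProduct_mulVec, dotProduct_comm]
    _ = y ⬝ᵥ A *ᵥ (y ᵥ* A) := rfl
    _ = Aᵀ *ᵥ y ⬝ᵥ Aᵀ *ᵥ y := by rw [dotProduct_mulVec, mulVec_transpose]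

theorem sum_dotProduct_self_rows_ne_zero [Field R] [LinearOrder R] [IsStrictOrderedRing R]
    [Nonempty m] {A : Matrix m n R} (hrows : ∀ i, A i ≠ 0) : ∑ j, A j ⬝ᵥ A j ≠ 0 := by
  have hpos : ∀ j, 0 < A j ⬝ᵥ A j := fun j =>
    (Fintype.sum_nonneg fun k => mul_self_nonneg (A j k)).lt_of_ne'
      (mt dotProduct_self_eq_zero.mp (hrows j))
  exact (sum_pos (fun j _ => hpos j) univ_nonempty).ne'

theorem sum_mul_dotProduct_self_mulVec_kaczmarz_step [Field R] [LinearOrder R]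
    [IsStrictOrderedRing R] (A : Matrix m n R) (hrows : ∀ i, A i ≠ 0) (r : n → R) :
    ∑ i, (A i ⬝ᵥ A i / ∑ j, A j ⬝ᵥ A j) *
        (A *ᵥ (r - (A i ⬝ᵥ r / A i ⬝ᵥ A i) • A i) ⬝ᵥ A *ᵥ (r - (A i ⬝ᵥ r / A i ⬝ᵥ A i) • A i))
      = A *ᵥ r ⬝ᵥ A *ᵥ r - (2 / ∑ j, A j ⬝ᵥ A j) * (Aᵀ *ᵥ (A *ᵥ r) ⬝ᵥ Aᵀ *ᵥ (A *ᵥ r))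
        + (1 / ∑ j, A j ⬝ᵥ A j) *
            ∑ i, (A i ⬝ᵥ r) ^ 2 * (A *ᵥ A i ⬝ᵥ A *ᵥ A i) / A i ⬝ᵥ A i := by
  rcases isEmpty_or_nonempty m with _ | _
  · simp [univ_eq_empty]
  set F := ∑ j, A j ⬝ᵥ A j
  have hF : F ≠ 0 := sum_dotProduct_self_rows_ne_zero hrows
  have hterm : ∀ i, (A i ⬝ᵥ A i / F) *
      (A *ᵥ (r - (A i ⬝ᵥ r / A i ⬝ᵥ A i) • A i) ⬝ᵥ A *ᵥ (r - (A i ⬝ᵥ r / A i ⬝ᵥ A i) • A i))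
      = A i ⬝ᵥ A i / F * (A *ᵥ r ⬝ᵥ A *ᵥ r) - 2 / F * ((A *ᵥ r) i * (A *ᵥ r ⬝ᵥ A *ᵥ A i))
        + 1 / F * ((A i ⬝ᵥ r) ^ 2 * (A *ᵥ A i ⬝ᵥ A *ᵥ A i) / A i ⬝ᵥ A i) := fun i => by
    have hi : A i ⬝ᵥ A i ≠ 0 := mt dotProduct_self_eq_zero.mp (hrows i)
    rw [mulVec_sub, mulVec_smul, dotProduct_self_sub_smul, mulVec]
    field_simp
  rw [sum_congr rfl fun i _ => hterm i, sum_add_distrib, sum_sub_distrib, ← sum_mul, ← sum_div,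
    ← mul_sum, ← mul_sum, sum_mul_dotProduct_mulVec_row, div_self hF, one_mul]

end

/-- Exact one-step identity for `E ‖A r'‖²` under randomized Kaczmarz. -/
theorem kaczmarz_one_step_identity {n : ℕ} (A : Matrix (Fin n) (Fin n) ℝ)
    (hrows : ∀ i, A i ≠ 0) (r : Fin n → ℝ) :
    ∑ i, (‖toE (A i)‖ ^ 2 / (∑ j, ‖toE (A j)‖ ^ 2)) *
        ‖toE (A.mulVec (r - (⟪toE (A i), toE r⟫ / ‖toE (A i)‖ ^ 2) • A i))‖ ^ 2
      = ‖toE (A.mulVec r)‖ ^ 2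
        - (2 / (∑ j, ‖toE (A j)‖ ^ 2)) * ‖toE (Aᵀ.mulVec (A.mulVec r))‖ ^ 2
        + (1 / (∑ j, ‖toE (A j)‖ ^ 2)) *
            ∑ i, ⟪toE (A i), toE r⟫ ^ 2 * ‖toE (A.mulVec (A i))‖ ^ 2 / ‖toE (A i)‖ ^ 2 := by
  simpa only [norm_toE_sq, inner_toE] using sum_mul_dotProduct_self_mulVec_kaczmarz_step A hrows r
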